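/- arXiv:0910.3700 — 3 statements merged into one kernel-verified Lean document; each statement's English description precedes it below -/
import Mathlib

section
/- Let R be a commutative ring, Ω a class of group homomorphisms, and (E,p) a localization functor on the category of groups with respect to Ω. For a group π, let π^{{n}} denote the n-th term of the universal R-local derived series determined by (E,p). Then for every group homomorphism α: π → G belonging to Ω and every n ∈ ℕ, one has α⁻¹(G^{{n}}) = π^{{n}}; in particular α maps π^{{n}} into G^{{n}} and the induced homomorphism π/π^{{n}} → G/G^{{n}} is injective. -/
open CategoryTheory TensorProduct

/-- An object `A` is local with respect to a class of morphisms `Ω` if every morphism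
`g : X ⟶ A` factors uniquely through every morphism `f : X ⟶ Y` of `Ω`. -/
def IsLocalObject {C : Type*} [Category C] (Ω : MorphismProperty C) (A : C) : Prop :=
  ∀ ⦃X Y : C⦄ (f : X ⟶ Y), Ω f → ∀ g : X ⟶ A, ∃! h : Y ⟶ A, f ≫ h = g

/-- `(E, p)` is a localization functor with respect to `Ω`. -/
structure IsLocalizationFunctor {C : Type*} [Category C] (Ω : MorphismProperty C)
    (E : C ⥤ C) (p : 𝟭 C ⟶ E) : Prop where
  local_obj : ∀ X : C, IsLocalObject Ω (E.obj X)
  universal : ∀ (X A : C), IsLocalObject Ω A → ∀ q : X ⟶ A,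
    ∃! h : E.obj X ⟶ A, p.app X ≫ h = q

/-- The kernel of `K → (K/[K,K]) ⊗_ℤ R`, abelianization followed by `x ↦ x ⊗ 1`. -/
def derivedKer (R : Type*) [CommRing R] (K : Type*) [Group K] : Subgroup K where
  carrier := {x : K |
    (Additive.ofMul (Abelianization.of x) ⊗ₜ[ℤ] (1 : R) :
      TensorProduct ℤ (Additive (Abelianization K)) R) = 0}
  one_mem' := by
    have : (Additive.ofMul (Abelianization.of (1 : K)) :
        Additive (Abelianization K)) = 0 := by
      simp
    simp [this]
  mul_mem' := by
    intro a b ha hb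
    have : (Additive.ofMul (Abelianization.of (a * b)) :
        Additive (Abelianization K))
        = Additive.ofMul (Abelianization.of a) + Additive.ofMul (Abelianization.of b) := by
      simp [ofMul_mul]
    simp only [Set.mem_setOf_eq] at *
    rw [this, add_tmul, ha, hb, add_zero]
  inv_mem' := by
    intro a ha
    have : (Additive.ofMul (Abelianization.of a⁻¹) :
        Additive (Abelianization K))
        = -Additive.ofMul (Abelianization.of a) := by
      simp [ofMul_inv]
    simp only [Set.mem_setOf_eq] at *
    rw [this, neg_tmul, ha, neg_zero]

/-- The `R`-derived series of a group `H`:  `H^0 = H` and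
`H^{n+1} = ker (H^n → (H^n/[H^n,H^n]) ⊗_ℤ R)`. -/
def rDerivedSeries (R : Type*) [CommRing R] (H : Type*) [Group H] : ℕ → Subgroup H
  | 0 => ⊤
  | n + 1 => Subgroup.map (rDerivedSeries R H n).subtype
      (derivedKer R (rDerivedSeries R H n))

/-- The universal `R`-local derived series of a group `π` determined by a localization
functor `(E, p)` on the category of groups: `π^{{n}} = p_π⁻¹((E π)^n)`. -/
def univLocalDerivedSeries (R : Type*) [CommRing R] (E : GrpCat ⥤ GrpCat) (p : 𝟭 GrpCat ⟶ E)
    (π : GrpCat) (n : ℕ) : Subgroup π :=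
  Subgroup.comap (p.app π).hom (rDerivedSeries R (E.obj π) n)

/-! Every `α ∈ Ω` becomes invertible under `E`, and the `R`-derived series is functorial in group
homomorphisms, hence carried onto itself by the isomorphism `E α`. Naturality of `p` then
identifies the preimage of `G^{{n}}` with that of `(E π)^n`. -/

namespace IsLocalObject

variable {C : Type*} [Category C] {Ω : MorphismProperty C} {A : C}

theorem hom_ext (hA : IsLocalObject Ω A) {X Y : C} {f : X ⟶ Y} (hf : Ω f) {h₁ h₂ : Y ⟶ A}
    (h : f ≫ h₁ = f ≫ h₂) : h₁ = h₂ :=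
  (hA f hf (f ≫ h₂)).unique h rfl

end IsLocalObject

namespace IsLocalizationFunctor

variable {C : Type*} [Category C] {Ω : MorphismProperty C} {E : C ⥤ C} {p : 𝟭 C ⟶ E}

theorem hom_ext (hE : IsLocalizationFunctor Ω E p) {X A : C} (hA : IsLocalObject Ω A)
    {h₁ h₂ : E.obj X ⟶ A} (h : p.app X ≫ h₁ = p.app X ≫ h₂) : h₁ = h₂ :=
  (hE.universal X A hA (p.app X ≫ h₂)).unique h rfl

/-- The inverse of `E.map α` is obtained by extending `p_X` first along `α`, then along `p_Y`. -/
theorem isIso_map (hE : IsLocalizationFunctor Ω E p) {X Y : C} {α : X ⟶ Y} (hα : Ω α) :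
    IsIso (E.map α) := by
  have hp : α ≫ p.app Y = p.app X ≫ E.map α := p.naturality α
  obtain ⟨h, hh, -⟩ := hE.local_obj X α hα (p.app X)
  obtain ⟨s, hs, -⟩ := hE.universal Y (E.obj X) (hE.local_obj X) h
  have hhE : h ≫ E.map α = p.app Y :=
    (hE.local_obj Y).hom_ext hα (by rw [← Category.assoc, hh, hp])
  refine ⟨s, hE.hom_ext (hE.local_obj X) ?_, hE.hom_ext (hE.local_obj Y) ?_⟩
  · rw [← Category.assoc, ← hp, Category.assoc, hs, hh, Category.comp_id]
  · rw [← Category.assoc, hs, hhE, Category.comp_id]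

end IsLocalizationFunctor

section DerivedSeries

variable (R : Type*) [CommRing R] {H K : Type*} [Group H] [Group K]

theorem map_mem_derivedKer (f : H →* K) {x : H} (hx : x ∈ derivedKer R H) :
    f x ∈ derivedKer R K := by
  have h := congrArg
    (LinearMap.rTensor R (MonoidHom.toAdditive (Abelianization.map f)).toIntLinearMap) hx
  simpa [derivedKer] using h

theorem map_rDerivedSeries_le (f : H →* K) (n : ℕ) :
    (rDerivedSeries R H n).map f ≤ rDerivedSeries R K n := by
  induction n with
  | zero => exact le_top
  | succ n ih =>
    rintro _ ⟨_, ⟨y, hy, rfl⟩, rfl⟩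
    let f' := (f.comp (rDerivedSeries R H n).subtype).codRestrict (rDerivedSeries R K n)
      fun y => ih ⟨y, y.2, rfl⟩
    exact ⟨f' y, map_mem_derivedKer R f' hy, rfl⟩

theorem comap_rDerivedSeries (e : H ≃* K) (n : ℕ) :
    (rDerivedSeries R K n).comap e.toMonoidHom = rDerivedSeries R H n := by
  refine le_antisymm (fun x hx => ?_)
    (Subgroup.map_le_iff_le_comap.mp (map_rDerivedSeries_le R e.toMonoidHom n))
  simpa using map_rDerivedSeries_le R e.symm.toMonoidHom n ⟨e x, hx, rfl⟩

end DerivedSeries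

/-- For a homomorphism `α : π ⟶ G` in `Ω`, the preimage of `G^{{n}}` is exactly `π^{{n}}`;
in particular `α` maps `π^{{n}}` into `G^{{n}}` and the induced homomorphism
`π/π^{{n}} → G/G^{{n}}` is injective. -/
theorem univLocalDerivedSeries_comap_eq (R : Type*) [CommRing R]
    (Ω : MorphismProperty GrpCat) (E : GrpCat ⥤ GrpCat) (p : 𝟭 GrpCat ⟶ E)
    (hE : IsLocalizationFunctor Ω E p)
    (π G : GrpCat) (α : π ⟶ G) (hα : Ω α) (n : ℕ) :
    Subgroup.comap α.hom (univLocalDerivedSeries R E p G n)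
      = univLocalDerivedSeries R E p π n := by
  have : IsIso (E.map α) := hE.isIso_map hα
  have hp : (p.app G).hom.comp α.hom = (E.map α).hom.comp (p.app π).hom :=
    congrArg GrpCat.Hom.hom (p.naturality α)
  simp only [univLocalDerivedSeries, Subgroup.comap_comap, hp]
  rw [← Subgroup.comap_comap]
  congr 1
  exact comap_rDerivedSeries R (asIso (E.map α)).groupIsoToMulEquiv n
end

section
/- Let p be a prime and G a finite p-group. Let ε: (ℤ/p)[G] → ℤ/p be the augmentation homomorphism of the group ring, sending every group element to 1. If A is a square matrix over (ℤ/p)[G] such that the matrix obtained by applying ε to each entry of A is invertible over ℤ/p, then A is invertible over (ℤ/p)[G]. (Equivalently, the Cohn localization of the group ring (ℤ/p)[G] with respect to its augmentation map to ℤ/p is (ℤ/p)[G] itself.) -/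
/-!
The augmentation ideal `I` of `k[G]`, for `k` of characteristic `p` and `G` a finite `p`-group,
is nil at the matrix level: if `X` has entries in `I`, some power of `X` vanishes. Pick a
nontrivial central `z`, of order `p ^ e`. By induction on `|G|`, a power `X ^ M` maps to zero over
`k[G ⧸ ⟨z⟩]`, so its entries are left multiples of the central element `c = z - 1`, and then
`(X ^ M) ^ (p ^ e)` is a multiple of `c ^ (p ^ e) = z ^ (p ^ e) - 1 = 0`. A surjection with nil
kernel reflects units, and `ε` is surjective on matrices.
-/

noncomputable def augmentation (R : Type*) [CommRing R] (G : Type*) [Group G] :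
    MonoidAlgebra R G →+* R :=
  ((MonoidAlgebra.lift R R G) 1).toRingHom

open Function MonoidAlgebra

theorem IsLocalHom.of_surjective_of_isNilpotent_of_map_eq_zero {R S : Type*} [Ring R] [Ring S]
    (f : R →+* S) (hf : Surjective f) (hker : ∀ x, f x = 0 → IsNilpotent x) :
    IsLocalHom f where
  map_nonunit a ha := by
    obtain ⟨u, hu⟩ := ha
    obtain ⟨b, hb⟩ := hf ↑u⁻¹
    have isUnit_mul : ∀ x y, f x * f y = 1 → IsUnit (x * y) := fun x y hxy => by
      simpa using (hker (x * y - 1) (by simp [hxy])).isUnit_add_one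
    obtain ⟨v, hv⟩ := isUnit_mul a b (by simp [hb, ← hu])
    obtain ⟨w, hw⟩ := isUnit_mul b a (by simp [hb, ← hu])
    have hright : a * (b * ↑v⁻¹) = 1 := by rw [← mul_assoc, ← hv, Units.mul_inv]
    have hleft : (↑w⁻¹ * b) * a = 1 := by rw [mul_assoc, ← hw, Units.inv_mul]
    exact ⟨⟨a, b * ↑v⁻¹, hright, left_inv_eq_right_inv hleft hright ▸ hleft⟩, rfl⟩

theorem RingHom.mapMatrix_surjective {R S n : Type*} [Ring R] [Ring S] [Fintype n]
    [DecidableEq n] {f : R →+* S} (hf : Surjective f) :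
    Surjective (f.mapMatrix : Matrix n n R →+* Matrix n n S) :=
  fun X => ⟨X.map (surjInv hf), by ext; simp [surjInv_eq hf]⟩

theorem Matrix.isNilpotent_of_forall_mem_span_singleton {R n : Type*} [Ring R] [Fintype n]
    [DecidableEq n] {c : R} (hc : ∀ r, Commute c r) (hcn : IsNilpotent c) {X : Matrix n n R}
    (hX : ∀ i j, X i j ∈ Ideal.span {c}) : IsNilpotent X := by
  choose Y hY using fun i j => Ideal.mem_span_singleton'.mp (hX i j)
  have hXY : X = Matrix.of Y * Matrix.scalar n c := by ext i j; simp [hY]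
  obtain ⟨q, hq⟩ := hcn
  refine ⟨q, ?_⟩
  rw [hXY, (Matrix.scalar_commute c hc _).symm.mul_pow, ← map_pow (Matrix.scalar n) c q, hq,
    map_zero, mul_zero]

namespace MonoidAlgebra

variable {k G : Type*}

instance charP [CommSemiring k] [Monoid G] (p : ℕ) [CharP k p] :
    CharP (MonoidAlgebra k G) p :=
  charP_of_injective_algebraMap (FaithfulSMul.algebraMap_injective k _) p

theorem single_sub_one_pow_eq_zero [CommRing k] {p : ℕ} [Fact p.Prime] [CharP k p] [Monoid G]
    {z : G} {e : ℕ} (hz : z ^ p ^ e = 1) : (single z (1 : k) - 1) ^ p ^ e = 0 := by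
  rw [sub_pow_char_pow_of_commute _ _ (Commute.one_right _), single_pow, hz, one_pow, one_pow,
    ← one_def, sub_self]

theorem commute_single_one_of_mem_center [Semiring k] [Group G] {z : G}
    (hz : z ∈ Subgroup.center G) (x : MonoidAlgebra k G) : Commute (single z (1 : k)) x := by
  induction x using MonoidAlgebra.induction_linear with
  | zero => exact Commute.zero_right _
  | add x y hx hy => exact hx.add_right hy
  | single g a =>
    simp only [Commute, SemiconjBy, single_mul_single, one_mul, mul_one,
      Subgroup.mem_center_iff.mp hz g]

theorem mem_span_single_sub_one_of_mapDomain_eq_zero [Ring k] [Group G] [Finite G] {z : G}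
    {x : MonoidAlgebra k G}
    (hx : mapDomain (QuotientGroup.mk : G → G ⧸ Subgroup.zpowers z) x = 0) :
    x ∈ Ideal.span {single z (1 : k) - 1} := by
  set σ : G → G := fun g => (QuotientGroup.mk g : G ⧸ Subgroup.zpowers z).out
  have hσ (y : MonoidAlgebra k G) : y - mapDomain σ y ∈ Ideal.span {single z (1 : k) - 1} := by
    induction y using MonoidAlgebra.induction_linear with
    | zero => simp
    | add y y' hy hy' =>
      rw [mapDomain_add, add_sub_add_comm]
      exact add_mem hy hy'
    | single g a =>
      obtain ⟨m, hm : z ^ m = (σ g)⁻¹ * g⟩ := mem_powers_iff_mem_zpowers.mpr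
        (QuotientGroup.eq.mp (QuotientGroup.out_eq' (QuotientGroup.mk g)))
      have hg : single g a - single (σ g) a = single (σ g) a *
          ((∑ i ∈ Finset.range m, single z (1 : k) ^ i) * (single z 1 - 1)) := by
        rw [geom_sum_mul, mul_sub, mul_one, single_pow, single_mul_single, one_pow, mul_one, hm,
          mul_inv_cancel_left]
      rw [mapDomain_single, hg, ← mul_assoc]
      exact Ideal.mul_mem_left _ _ (Ideal.mem_span_singleton_self _)
  have hσx : mapDomain σ x = 0 := by
    have : mapDomain σ x = mapDomain Quotient.out
        (mapDomain (QuotientGroup.mk : G → G ⧸ Subgroup.zpowers z) x) :=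
      congrArg ofCoeff Finsupp.mapDomain_comp
    rw [this, hx, mapDomain_zero]
  simpa [hσx] using hσ x

end MonoidAlgebra

section Augmentation

variable (k : Type*) [CommRing k] {G : Type*} [Group G]

@[simp]
theorem augmentation_single (g : G) (a : k) : augmentation k G (single g a) = a := by
  simp [augmentation, lift_single]

theorem augmentation_surjective : Surjective (augmentation k G) :=
  fun a => ⟨single 1 a, augmentation_single k 1 a⟩

theorem augmentation_injective [Subsingleton G] : Injective (augmentation k G) := by
  have hx : ∀ x : MonoidAlgebra k G, single 1 (augmentation k G x) = x := by
    intro x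
    induction x using MonoidAlgebra.induction_linear with
    | zero => simp
    | add x y hx hy => rw [map_add, single_add, hx, hy]
    | single g a => rw [augmentation_single, Subsingleton.elim g 1]
  exact LeftInverse.injective hx

theorem augmentation_comp_mapDomainRingHom {H : Type*} [Group H] (f : G →* H) :
    (augmentation k H).comp (mapDomainRingHom k f) = augmentation k G := by
  ext g
  · simp
  · simp [mapDomainRingHom]

end Augmentation

theorem isNilpotent_of_map_augmentation_eq_zero {k : Type*} [CommRing k] {p : ℕ}
    [Fact p.Prime] [CharP k p] {G : Type*} [Group G] [Finite G] (hG : IsPGroup p G)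
    {n : Type*} [Fintype n] [DecidableEq n] {X : Matrix n n (MonoidAlgebra k G)}
    (hX : X.map (augmentation k G) = 0) : IsNilpotent X := by
  induction hcard : Nat.card G using Nat.strong_induction_on generalizing G with
  | _ m ih =>
  rcases subsingleton_or_nontrivial G with _ | _
  · refine ⟨1, Matrix.ext fun i j => ?_⟩
    simpa using (map_eq_zero_iff _ (augmentation_injective k)).mp (congr_fun₂ hX i j)
  have := hG.center_nontrivial
  obtain ⟨⟨z, hz⟩, hz1⟩ := exists_ne (1 : Subgroup.center G)
  set N := Subgroup.zpowers z
  have : N.Normal := ⟨fun y hy g => by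
    rwa [(Subgroup.mem_center_iff.mp (Subgroup.zpowers_le.mpr hz hy) g), mul_inv_cancel_right]⟩
  have hcardQ : Nat.card (G ⧸ N) < m := by
    rw [← hcard, Subgroup.card_eq_card_quotient_mul_card_subgroup N]
    refine lt_mul_of_one_lt_right Nat.card_pos ?_
    rw [Subgroup.one_lt_card_iff_ne_bot, Subgroup.zpowers_ne_bot]
    exact fun h => hz1 (Subtype.ext h)
  set π := mapDomainRingHom k (QuotientGroup.mk' N)
  obtain ⟨M, hM⟩ : IsNilpotent (X.map π) := ih _ hcardQ (hG.to_quotient N)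
    (by rw [Matrix.map_map, ← RingHom.coe_comp, augmentation_comp_mapDomainRingHom, hX]) rfl
  have hXM : ∀ i j, (X ^ M) i j ∈ Ideal.span {single z (1 : k) - 1} := by
    have : (X ^ M).map π = 0 := by rw [← RingHom.mapMatrix_apply, map_pow]; exact hM
    exact fun i j => mem_span_single_sub_one_of_mapDomain_eq_zero (congr_fun₂ this i j)
  obtain ⟨e, he⟩ := hG z
  exact (Matrix.isNilpotent_of_forall_mem_span_singleton
    (fun r => (commute_single_one_of_mem_center hz r).sub_left (Commute.one_left r))
    ⟨p ^ e, single_sub_one_pow_eq_zero he⟩ hXM).of_pow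

/-- For a finite `p`-group `G`, every square matrix over `(ℤ/p)[G]` whose entrywise
augmentation is invertible over `ℤ/p` is itself invertible over `(ℤ/p)[G]`; equivalently,
the Cohn localization of `(ℤ/p)[G]` with respect to the augmentation is `(ℤ/p)[G]` itself. -/
theorem monoidAlgebra_zmod_pGroup_matrix_isUnit (p : ℕ) [Fact p.Prime]
    (G : Type*) [Group G] [Finite G] (hG : IsPGroup p G)
    (n : ℕ) (A : Matrix (Fin n) (Fin n) (MonoidAlgebra (ZMod p) G))
    (hA : IsUnit (A.map (augmentation (ZMod p) G))) :
    IsUnit A := by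
  have : IsLocalHom ((augmentation (ZMod p) G).mapMatrix (m := Fin n)) :=
    .of_surjective_of_isNilpotent_of_map_eq_zero _
      (RingHom.mapMatrix_surjective (augmentation_surjective _))
      fun _ hX => isNilpotent_of_map_augmentation_eq_zero hG hX
  exact IsUnit.of_map (augmentation (ZMod p) G).mapMatrix A hA
end

section
/- Let f: A → B be a surjective ring homomorphism between (not necessarily commutative) rings, with kernel I. Suppose an A-module M has the property that for every index set X and every A-linear map α: F → F' between free left A-modules F and F' each with basis indexed by X, such that the induced map F/I·F → F'/I·F' is bijective, the precomposition map Hom_A(F', M) → Hom_A(F, M), h ↦ h ∘ α, is bijective. Then every submodule N ⊆ M satisfying N = I·N (where I·N is the submodule generated by all products r·x with r ∈ I and x ∈ N; equivalently N ⊗_A B = 0, i.e., N is perfect) is the zero submodule. -/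
universe u u' v

/-- The submodule `I·N` of `M` generated by all products `r • x` with `r ∈ I`, `x ∈ N`. -/
def idealSmul {A : Type*} [Ring A] (I : Ideal A) {M : Type*} [AddCommGroup M]
    [Module A M] (N : Submodule A M) : Submodule A M :=
  Submodule.span A {y : M | ∃ r ∈ I, ∃ x ∈ N, y = r • x}

/-!
Write `N = I·N` as the image of `I·A^(N)` under `π : A^(N) → M`, `eₙ ↦ n`: each `n ∈ N` is
`π cₙ` for some `cₙ ∈ I·A^(N)`. The endomorphism `α = id - β` of `A^(N)` with `β eₙ = cₙ` is the
identity modulo `I`, and `π ∘ α = 0`. Locality makes precomposition with `α` injective,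
so `π = 0`, and `N`, the range of `π`, vanishes.
-/

section

variable {A : Type*} [Ring A] (I : Ideal A) {M : Type*} [AddCommGroup M] [Module A M]

theorem map_idealSmul {P : Type*} [AddCommGroup P] [Module A P] (g : P →ₗ[A] M) (N : Submodule A P) :
    (idealSmul I N).map g = idealSmul I (N.map g) := by
  rw [idealSmul, idealSmul, Submodule.map_span]
  congr 1
  ext y
  constructor
  · rintro ⟨_, ⟨r, hr, x, hx, rfl⟩, rfl⟩
    exact ⟨r, hr, g x, Submodule.mem_map_of_mem hx, map_smul g r x⟩
  · rintro ⟨r, hr, _, ⟨x, hx, rfl⟩, rfl⟩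
    exact ⟨r • x, ⟨r, hr, x, hx, rfl⟩, map_smul g r x⟩

theorem range_linearCombination_subtype (N : Submodule A M) :
    LinearMap.range (Finsupp.linearCombination A N.subtype) = N := by
  rw [Finsupp.range_linearCombination, Submodule.coe_subtype, Subtype.range_coe, Submodule.span_eq]

theorem idealSmul_eq_map_linearCombination (N : Submodule A M) :
    idealSmul I N =
      (idealSmul I (⊤ : Submodule A (N →₀ A))).map (Finsupp.linearCombination A N.subtype) := by
  rw [map_idealSmul, Submodule.map_top, range_linearCombination_subtype]

end

section

variable {A P : Type*} [Ring A] [AddCommGroup P] [Module A P] {J : Submodule A P}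
  {β : P →ₗ[A] P}

theorem mem_of_id_sub_apply_mem (hβ : LinearMap.range β ≤ J) {x : P}
    (hx : (LinearMap.id - β : P →ₗ[A] P) x ∈ J) : x ∈ J := by
  simpa using J.add_mem hx (hβ (LinearMap.mem_range_self β x))

theorem sub_id_sub_apply_mem (hβ : LinearMap.range β ≤ J) (y : P) :
    y - (LinearMap.id - β : P →ₗ[A] P) y ∈ J := by
  simpa using hβ (LinearMap.mem_range_self β y)

end

theorem perfect_submodule_eq_bot_of_local_general {A : Type u} {B : Type u'} [Ring A] [Ring B]
    (f : A →+* B)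
    (M : Type v) [AddCommGroup M] [Module A M]
    (hM : ∀ (X : Type v) (α : (X →₀ A) →ₗ[A] (X →₀ A)),
      (∀ x : X →₀ A,
          α x ∈ idealSmul (RingHom.ker f) (⊤ : Submodule A (X →₀ A)) →
          x ∈ idealSmul (RingHom.ker f) (⊤ : Submodule A (X →₀ A))) →
      (∀ y : X →₀ A, ∃ x : X →₀ A,
          y - α x ∈ idealSmul (RingHom.ker f) (⊤ : Submodule A (X →₀ A))) →
      Function.Bijective (fun h : (X →₀ A) →ₗ[A] M => h.comp α))
    (N : Submodule A M) (hN : N = idealSmul (RingHom.ker f) N) :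
    N = ⊥ := by
  set J := idealSmul (RingHom.ker f) (⊤ : Submodule A (N →₀ A))
  set π := Finsupp.linearCombination A N.subtype
  have hN' : N = J.map π := hN.trans (idealSmul_eq_map_linearCombination _ N)
  choose c hcJ hc using fun n : N => Submodule.mem_map.mp (hN'.le n.2)
  set β := Finsupp.linearCombination A c
  have hβ : LinearMap.range β ≤ J := by
    rw [Finsupp.range_linearCombination, Submodule.span_le]
    rintro _ ⟨n, rfl⟩
    exact hcJ n
  have hπβ : π ∘ₗ β = π := by
    refine Finsupp.lhom_ext fun n a => ?_
    simp only [LinearMap.comp_apply, β, Finsupp.linearCombination_single, map_smul, hc]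
    simp [π]
  have hπ : π = 0 := by
    refine (hM N (LinearMap.id - β) (fun x => mem_of_id_sub_apply_mem hβ)
      (fun y => ⟨y, sub_id_sub_apply_mem hβ y⟩)).1 ?_
    simp [LinearMap.comp_sub, hπβ]
  calc N = LinearMap.range π := (range_linearCombination_subtype N).symm
    _ = ⊥ := by rw [hπ, LinearMap.range_zero]

/-- Let `f : A → B` be a surjective ring homomorphism with kernel `I`.  If `M` is an
`A`-module which is local with respect to all maps `α : F → F'` between free `A`-modules
with the same basis index set that become bijective modulo `I` (i.e. `Hom(F', M) → Hom(F, M)`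
is bijective for all such `α`), then every perfect submodule `N` of `M` (one with
`N = I·N`) is zero. -/
theorem perfect_submodule_eq_bot_of_local {A : Type u} {B : Type u'} [Ring A] [Ring B]
    (f : A →+* B) (hf : Function.Surjective f)
    (M : Type v) [AddCommGroup M] [Module A M]
    (hM : ∀ (X : Type v) (α : (X →₀ A) →ₗ[A] (X →₀ A)),
      (∀ x : X →₀ A,
          α x ∈ idealSmul (RingHom.ker f) (⊤ : Submodule A (X →₀ A)) →
          x ∈ idealSmul (RingHom.ker f) (⊤ : Submodule A (X →₀ A))) →
      (∀ y : X →₀ A, ∃ x : X →₀ A,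
          y - α x ∈ idealSmul (RingHom.ker f) (⊤ : Submodule A (X →₀ A))) →
      Function.Bijective (fun h : (X →₀ A) →ₗ[A] M => h.comp α))
    (N : Submodule A M) (hN : N = idealSmul (RingHom.ker f) N) :
    N = ⊥ :=
  perfect_submodule_eq_bot_of_local_general f M hM N hN
end
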